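/- Given a positive definite density matrix ρ₁₂ on H₁ ⊗ H₂ with marginal ρ₁ = Tr₂ ρ₁₂, the map T_ρ(τ) = ρ₁₂^{1/2} (ρ₁^{−1/2} τ ρ₁^{−1/2} ⊗ I₂) ρ₁₂^{1/2} sending operators on H₁ to operators on H₁ ⊗ H₂ is completely positive and trace preserving, and T_ρ(ρ₁) = ρ₁₂. -/

import Mathlib

open Matrix Kronecker
open scoped ComplexOrder

noncomputable def mexp {n : Type*} [Fintype n] [DecidableEq n] (A : Matrix n n ℂ) : Matrix n n ℂ :=
  if h : A.IsHermitian then h.cfc Real.exp else 0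

noncomputable def mlog {n : Type*} [Fintype n] [DecidableEq n] (A : Matrix n n ℂ) : Matrix n n ℂ :=
  if h : A.IsHermitian then h.cfc Real.log else 0

open scoped Classical in
noncomputable def msqrt {n : Type*} [Fintype n] [DecidableEq n] (A : Matrix n n ℂ) : Matrix n n ℂ :=
  if h : A.PosSemidef then (h.1.eigenvectorUnitary : Matrix n n ℂ) *
    diagonal ((↑) ∘ Real.sqrt ∘ h.1.eigenvalues) * (star h.1.eigenvectorUnitary : Matrix n n ℂ) else 0

noncomputable def entropy {n : Type*} [Fintype n] [DecidableEq n] (ρ : Matrix n n ℂ) : ℝ :=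
  -((ρ * mlog ρ).trace.re)

noncomputable def relEnt {n : Type*} [Fintype n] [DecidableEq n] (ρ σ : Matrix n n ℂ) : ℝ :=
  ((ρ * (mlog ρ - mlog σ)).trace.re)

noncomputable def ptrace₂ {n m : Type*} [Fintype n] [Fintype m]
    (ρ : Matrix (n × m) (n × m) ℂ) : Matrix n n ℂ :=
  Matrix.of fun i j => ∑ k, ρ (i, k) (j, k)

noncomputable def ptrace₁ {n m : Type*} [Fintype n] [Fintype m]
    (ρ : Matrix (n × m) (n × m) ℂ) : Matrix m m ℂ :=
  Matrix.of fun i j => ∑ k, ρ (k, i) (k, j)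

noncomputable def traceNorm {n : Type*} [Fintype n] [DecidableEq n] (A : Matrix n n ℂ) : ℝ :=
  ((((Matrix.posSemidef_conjTranspose_mul_self A).1.eigenvectorUnitary : Matrix n n ℂ) *
    diagonal (((↑) : ℝ → ℂ) ∘ Real.sqrt ∘ (Matrix.posSemidef_conjTranspose_mul_self A).1.eigenvalues) *
    (star (Matrix.posSemidef_conjTranspose_mul_self A).1.eigenvectorUnitary : Matrix n n ℂ)).trace).re

/-!
With `A = ρ₁^{-1/2}` and `S = ρ₁₂^{1/2}`, the map factors as `τ ↦ A τ A`, then `τ ↦ τ ⊗ 1`, then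
`X ↦ S X S`; conjugations and tensoring with an identity are completely positive, hence so is `T`.
Since `Tr (ρ₁₂ (B ⊗ 1)) = Tr (ρ₁ B)`, cyclicity of the trace gives
`Tr T(τ) = Tr (ρ₁₂ (A τ A ⊗ 1)) = Tr (A ρ₁ A τ) = Tr τ`, and `A ρ₁ A = 1` also gives `T(ρ₁) = S S = ρ₁₂`.
-/

section MatrixSqrt

open scoped MatrixOrder

variable {n : Type*} [Fintype n] [DecidableEq n] {A : Matrix n n ℂ}

lemma msqrt_eq_cfc (hA : A.PosSemidef) : msqrt A = cfc Real.sqrt A := by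
  rw [msqrt, dif_pos hA, hA.1.cfc_eq, IsHermitian.cfc, Unitary.conjStarAlgAut_apply]
  rfl

lemma isHermitian_msqrt (hA : A.PosSemidef) : (msqrt A).IsHermitian := by
  rw [msqrt_eq_cfc hA]
  exact cfc_predicate _ _

lemma msqrt_mul_msqrt (hA : A.PosSemidef) : msqrt A * msqrt A = A := by
  rw [msqrt_eq_cfc hA, ← cfc_mul ..]
  exact (cfc_congr fun x hx => Real.mul_self_sqrt (spectrum_nonneg_of_nonneg hA.nonneg hx)).trans
    (cfc_id' ℝ A)

lemma isUnit_msqrt (hA : A.PosDef) : IsUnit (msqrt A) :=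
  ((Commute.refl _).isUnit_mul_iff.mp ((msqrt_mul_msqrt hA.posSemidef).symm ▸ hA.isUnit)).1

lemma inv_msqrt_mul_mul_inv_msqrt (hA : A.PosDef) : (msqrt A)⁻¹ * A * (msqrt A)⁻¹ = 1 := by
  have hdet := (Matrix.isUnit_iff_isUnit_det _).mp (isUnit_msqrt hA)
  calc (msqrt A)⁻¹ * A * (msqrt A)⁻¹
      = ((msqrt A)⁻¹ * msqrt A) * (msqrt A * (msqrt A)⁻¹) := by
        rw [Matrix.mul_assoc _ (msqrt A), ← Matrix.mul_assoc (msqrt A), msqrt_mul_msqrt hA.posSemidef,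
          Matrix.mul_assoc]
    _ = 1 := by rw [Matrix.nonsing_inv_mul _ hdet, Matrix.mul_nonsing_inv _ hdet, Matrix.one_mul]

end MatrixSqrt

section PartialTrace

variable {n m : Type*} [Fintype n] [Fintype m]

lemma ptrace₂_eq_sum_submatrix (ρ : Matrix (n × m) (n × m) ℂ) :
    ptrace₂ ρ = ∑ k, ρ.submatrix (·, k) (·, k) := by
  ext i j
  simp [ptrace₂, Matrix.sum_apply]

lemma Matrix.PosDef.ptrace₂ [Nonempty m] {ρ : Matrix (n × m) (n × m) ℂ} (hρ : ρ.PosDef) :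
    (ptrace₂ ρ).PosDef := by
  rw [ptrace₂_eq_sum_submatrix]
  exact posDef_sum Finset.univ_nonempty fun k _ =>
    hρ.submatrix fun i j h => (Prod.ext_iff.mp h).1

lemma trace_mul_kronecker_one [DecidableEq m] (ρ : Matrix (n × m) (n × m) ℂ) (B : Matrix n n ℂ) :
    (ρ * (B ⊗ₖ (1 : Matrix m m ℂ))).trace = (ptrace₂ ρ * B).trace := by
  simp only [Matrix.trace, Matrix.diag, Matrix.mul_apply, ptrace₂, Matrix.of_apply,
    Matrix.kroneckerMap_apply, Matrix.one_apply, Fintype.sum_prod_type, mul_ite, mul_one,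
    mul_zero, Finset.sum_ite_eq', Finset.mem_univ, if_true, Finset.sum_mul]
  exact Finset.sum_congr rfl fun i _ => Finset.sum_comm

end PartialTrace

section CompletePositivity

variable {n m p q : Type*}

/-- `(id_ι ⊗ Φ) M`, reading `M` as an `ι × ι` block matrix with blocks in `Matrix n n ℂ`. -/
def ampliate (Φ : Matrix n n ℂ → Matrix p p ℂ) {ι : Type*} (M : Matrix (ι × n) (ι × n) ℂ) :
    Matrix (ι × p) (ι × p) ℂ :=
  of fun a b => Φ (of fun i j => M (a.1, i) (b.1, j)) a.2 b.2

def IsCompletelyPositive [Fintype n] [Fintype p] (Φ : Matrix n n ℂ → Matrix p p ℂ) : Prop :=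
  ∀ (ι : Type) [Fintype ι] [DecidableEq ι] (M : Matrix (ι × n) (ι × n) ℂ),
    M.PosSemidef → (ampliate Φ M).PosSemidef

lemma IsCompletelyPositive.comp [Fintype n] [Fintype p] [Fintype q]
    {Φ : Matrix p p ℂ → Matrix q q ℂ} {Ψ : Matrix n n ℂ → Matrix p p ℂ}
    (hΦ : IsCompletelyPositive Φ) (hΨ : IsCompletelyPositive Ψ) :
    IsCompletelyPositive (Φ ∘ Ψ) :=
  fun ι _ _ M hM => hΦ ι _ (hΨ ι M hM)

lemma ampliate_conj {ι : Type*} [Fintype ι] [DecidableEq ι] [Fintype n] (C : Matrix n p ℂ)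
    (M : Matrix (ι × n) (ι × n) ℂ) :
    ampliate (fun X : Matrix n n ℂ => Cᴴ * X * C) M =
      ((1 : Matrix ι ι ℂ) ⊗ₖ C)ᴴ * M * ((1 : Matrix ι ι ℂ) ⊗ₖ C) := by
  ext ⟨a, i⟩ ⟨b, j⟩
  simp only [ampliate, conjTranspose_kronecker, conjTranspose_one, Matrix.mul_apply,
    Matrix.kroneckerMap_apply, Matrix.one_apply, Matrix.of_apply, Fintype.sum_prod_type_right,
    ite_mul, zero_mul, mul_ite, mul_zero, one_mul, Finset.sum_ite_eq, Finset.sum_ite_eq',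
    Finset.mem_univ, if_true]

lemma isCompletelyPositive_conj [Fintype n] [Fintype p] (C : Matrix n p ℂ) :
    IsCompletelyPositive (fun X : Matrix n n ℂ => Cᴴ * X * C) := fun ι _ _ M hM => by
  rw [ampliate_conj]
  exact hM.conjTranspose_mul_mul_same _

lemma isCompletelyPositive_kronecker_one [Fintype n] [Fintype m] [DecidableEq m] :
    IsCompletelyPositive (· ⊗ₖ (1 : Matrix m m ℂ) : Matrix n n ℂ → _) :=
  fun _ _ _ _ hM => (hM.kronecker PosSemidef.one).submatrix (Equiv.prodAssoc _ n m).symm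

end CompletePositivity

theorem stmt18 {n m : Type*} [Fintype n] [DecidableEq n] [Fintype m] [DecidableEq m]
    (ρ₁₂ : Matrix (n × m) (n × m) ℂ) (hρ : ρ₁₂.PosDef) (htr : ρ₁₂.trace = 1)
    (T : Matrix n n ℂ → Matrix (n × m) (n × m) ℂ)
    (hT : ∀ τ : Matrix n n ℂ, T τ = msqrt ρ₁₂ *
        (((msqrt (ptrace₂ ρ₁₂))⁻¹ * τ * (msqrt (ptrace₂ ρ₁₂))⁻¹) ⊗ₖ (1 : Matrix m m ℂ)) *
        msqrt ρ₁₂) :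
    (∀ k : ℕ, ∀ M : Matrix (Fin k × n) (Fin k × n) ℂ, M.PosSemidef →
      (Matrix.of fun p q : Fin k × (n × m) =>
        T (Matrix.of fun i j => M (p.1, i) (q.1, j)) p.2 q.2).PosSemidef) ∧
    (∀ τ : Matrix n n ℂ, (T τ).trace = τ.trace) ∧
    T (ptrace₂ ρ₁₂) = ρ₁₂ := by
  have : Nonempty m := by
    by_contra h
    rw [not_nonempty_iff] at h
    simp [Matrix.trace] at htr
  set ρ₁ := ptrace₂ ρ₁₂
  set S := msqrt ρ₁₂
  set A := (msqrt ρ₁)⁻¹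
  have hS : Sᴴ = S := (isHermitian_msqrt hρ.posSemidef).eq
  have hA : Aᴴ = A := (isHermitian_msqrt hρ.ptrace₂.posSemidef).inv.eq
  have hSS : S * S = ρ₁₂ := msqrt_mul_msqrt hρ.posSemidef
  have hAρ₁A : A * ρ₁ * A = 1 := inv_msqrt_mul_mul_inv_msqrt hρ.ptrace₂
  refine ⟨fun k => ?_, fun τ => ?_, ?_⟩
  · have hCP : IsCompletelyPositive T := by
      convert (isCompletelyPositive_conj S).comp
        (isCompletelyPositive_kronecker_one.comp (isCompletelyPositive_conj A)) using 1
      ext1 τ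
      rw [hT, Function.comp_apply, Function.comp_apply, hS, hA]
    exact hCP (Fin k)
  · rw [hT, trace_mul_cycle, hSS, trace_mul_kronecker_one, ← Matrix.mul_assoc, ← Matrix.mul_assoc,
      trace_mul_cycle, ← Matrix.mul_assoc, hAρ₁A, Matrix.one_mul]
  · rw [hT, hAρ₁A, one_kronecker_one, Matrix.mul_one, hSS]
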